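/- (Cumulative monotone trends suffice.) Fix t ≥ 2 and suppose the cumulative monotone trends condition holds: ∑_{s=2}^{t} min{Δ_s(a), Δ_s(b)} ≤ ∑_{s=2}^{t} Δ_s(trt) ≤ ∑_{s=2}^{t} max{Δ_s(a), Δ_s(b)}, and A_1 = 0. Then the bracketing bounds remain valid: ∑_{s=2}^{t} min{τ_s(a), τ_s(b)} ≤ A_t ≤ ∑_{s=2}^{t} max{τ_s(a), τ_s(b)}. -/

import Mathlib

/-! Since `A 1 = 0`, the increments `A s - A (s - 1)` telescope to `A t`. Subtracting a
group's trend turns a `max` of trends into a `min` of DID parameters and vice versa, so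
`∑ min τ_s = A t + ∑ Δ_s(trt) - ∑ max Δ_s` and `∑ max τ_s = A t + ∑ Δ_s(trt) - ∑ min Δ_s`;
the cumulative condition says exactly that the last two terms have the right sign. -/

open Finset

theorem Finset.sum_Icc_sub_pred {G : Type*} [AddCommGroup G] (f : ℕ → G) {m n : ℕ}
    (hmn : m ≤ n) : ∑ s ∈ Icc (m + 1) n, (f s - f (s - 1)) = f n - f m := by
  rw [← Ico_add_one_right_eq_Icc, ← sum_Ico_add', ← sum_Ico_sub f hmn]
  simp only [Nat.add_sub_cancel]

section Bracketing

variable {ι α : Type*} [AddCommGroup α] [LinearOrder α] [IsOrderedAddMonoid α]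
  (s : Finset ι) (d c x y : ι → α)

theorem Finset.sum_min_add_sub_le (h : ∑ i ∈ s, c i ≤ ∑ i ∈ s, max (x i) (y i)) :
    ∑ i ∈ s, min (d i + c i - x i) (d i + c i - y i) ≤ ∑ i ∈ s, d i := by
  calc ∑ i ∈ s, min (d i + c i - x i) (d i + c i - y i)
      = ∑ i ∈ s, d i + (∑ i ∈ s, c i - ∑ i ∈ s, max (x i) (y i)) := by
        rw [← sum_sub_distrib, ← sum_add_distrib]
        exact sum_congr rfl fun i _ => by rw [min_sub_sub_left, add_sub_assoc]
    _ ≤ ∑ i ∈ s, d i := add_le_of_nonpos_right (sub_nonpos.mpr h)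

theorem Finset.le_sum_max_add_sub (h : ∑ i ∈ s, min (x i) (y i) ≤ ∑ i ∈ s, c i) :
    ∑ i ∈ s, d i ≤ ∑ i ∈ s, max (d i + c i - x i) (d i + c i - y i) := by
  calc ∑ i ∈ s, d i
      ≤ ∑ i ∈ s, d i + (∑ i ∈ s, c i - ∑ i ∈ s, min (x i) (y i)) :=
        le_add_of_nonneg_right (sub_nonneg.mpr h)
    _ = ∑ i ∈ s, max (d i + c i - x i) (d i + c i - y i) := by
        rw [← sum_sub_distrib, ← sum_add_distrib]
        exact sum_congr rfl fun i _ => by rw [max_sub_sub_left, add_sub_assoc]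

end Bracketing

/-- Cumulative monotone trends suffice: if only the cumulative version
of the monotone trends condition holds, i.e.
`∑_{s=2}^t min{Δ_s(a), Δ_s(b)} ≤ ∑_{s=2}^t Δ_s(trt) ≤ ∑_{s=2}^t max{Δ_s(a), Δ_s(b)}`,
and `A 1 = 0`, the bracketing bounds on `A_t` remain valid. -/
theorem did_bracketing_cumulative_monotone_trends
    (μa μb μc A : ℕ → ℝ) (t : ℕ) (ht : 2 ≤ t) (hA1 : A 1 = 0)
    (hcum_lower : (∑ s ∈ Finset.Icc 2 t,
        min (μa s - μa (s - 1)) (μb s - μb (s - 1))) ≤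
      ∑ s ∈ Finset.Icc 2 t, (μc s - μc (s - 1)))
    (hcum_upper : (∑ s ∈ Finset.Icc 2 t, (μc s - μc (s - 1))) ≤
      ∑ s ∈ Finset.Icc 2 t, max (μa s - μa (s - 1)) (μb s - μb (s - 1))) :
    (∑ s ∈ Finset.Icc 2 t,
        min ((A s - A (s - 1)) + (μc s - μc (s - 1)) - (μa s - μa (s - 1)))
            ((A s - A (s - 1)) + (μc s - μc (s - 1)) - (μb s - μb (s - 1)))) ≤ A t ∧
    A t ≤ (∑ s ∈ Finset.Icc 2 t,
        max ((A s - A (s - 1)) + (μc s - μc (s - 1)) - (μa s - μa (s - 1)))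
            ((A s - A (s - 1)) + (μc s - μc (s - 1)) - (μb s - μb (s - 1)))) := by
  have hA : ∑ s ∈ Icc 2 t, (A s - A (s - 1)) = A t := by
    rw [sum_Icc_sub_pred A (by omega : 1 ≤ t), hA1, sub_zero]
  rw [← hA]
  exact ⟨sum_min_add_sub_le _ _ _ _ _ hcum_upper, le_sum_max_add_sub _ _ _ _ _ hcum_lower⟩
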